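/- Let s be affine and t monotone on a complete lattice. If s ∘ t ≤ t^* ∘ (s ⊔ id), then s^* ∘ t^* ≤ t^* ∘ s^*. Similarly, if s ∘ t ≤ (t ⊔ id) ∘ s^*, then s^* ∘ t^* ≤ t^* ∘ s^*. -/

import Mathlib

/-!
Since `t^*` is the least prefixpoint of `y ↦ x ⊔ t y`, information about `s (t^* y)` is
obtained from the greatest element `W` below a suitable bound that satisfies the relevant
property: affinity of `s` makes the property closed under the join defining `W`, the
hypothesis on `s ∘ t` makes it stable under `t`, so `t W ≤ W` and hence `t^* y ≤ W`.
In both cases this yields `s (t^* (s^* x)) ≤ t^* (s^* x)`, which is all that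
`s^* (t^* x) ≤ t^* (s^* x)` requires.
-/

/-- The least (pre)fixpoint of `y ↦ x ⊔ s y` (Knaster–Tarski); for monotone `s`
this gives the least closure above `s`. -/
def lstar {X : Type*} [CompleteLattice X] (s : X → X) (x : X) : X :=
  sInf {y | x ⊔ s y ≤ y}

section CompleteLattice

variable {X : Type*} [CompleteLattice X]

def IsAffine (s : X → X) : Prop :=
  ∀ S : Set X, S.Nonempty → s (sSup S) = ⨆ x ∈ S, s x

theorem le_lstar (f : X → X) (x : X) : x ≤ lstar f x :=
  le_sInf fun _ hy => le_sup_left.trans hy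

theorem lstar_le {f : X → X} {x y : X} (h : x ⊔ f y ≤ y) : lstar f x ≤ y :=
  sInf_le h

theorem lstar_mono (f : X → X) : Monotone (lstar f) := fun _ _ hab =>
  le_sInf fun _ hy => lstar_le (sup_le (hab.trans (le_sup_left.trans hy)) (le_sup_right.trans hy))

theorem apply_lstar_le {f : X → X} (hf : Monotone f) (x : X) : f (lstar f x) ≤ lstar f x :=
  le_sInf fun _ hy => (hf (sInf_le hy)).trans (le_sup_right.trans hy)

theorem lstar_lstar_le {f : X → X} (hf : Monotone f) (x : X) :
    lstar f (lstar f x) ≤ lstar f x :=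
  lstar_le (sup_le le_rfl (apply_lstar_le hf x))

theorem lstar_le_sSup {f : X → X} {K : Set X} {x : X} (hx : x ∈ K) (hf : f (sSup K) ∈ K) :
    lstar f x ≤ sSup K :=
  lstar_le (sup_le (le_sSup hx) (le_sSup hf))

theorem lstar_lstar_le_of_apply_le {s t : X → X} {x : X}
    (h : s (lstar t (lstar s x)) ≤ lstar t (lstar s x)) :
    lstar s (lstar t x) ≤ lstar t (lstar s x) :=
  lstar_le (sup_le (lstar_mono t (le_lstar s x)) h)

namespace IsAffine

variable {s t : X → X}

theorem apply_sSup_le (hs : IsAffine s) {S : Set X} (hS : S.Nonempty) {b : X}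
    (h : ∀ z ∈ S, s z ≤ b) : s (sSup S) ≤ b := by
  rw [hs S hS]
  exact iSup₂_le h

theorem map_sup (hs : IsAffine s) (a b : X) : s (a ⊔ b) = s a ⊔ s b := by
  rw [← sSup_pair, hs _ (Set.insert_nonempty a {b}), iSup_pair]

theorem monotone (hs : IsAffine s) : Monotone s := fun a b hab =>
  calc s a ≤ s a ⊔ s b := le_sup_left
    _ = s b := by rw [← hs.map_sup, sup_eq_right.mpr hab]

theorem apply_lstar_le_lstar_sup (hs : IsAffine s) (ht : Monotone t)
    (h : ∀ x, s (t x) ≤ lstar t (s x ⊔ x)) (y : X) :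
    s (lstar t y) ≤ lstar t (s y ⊔ y) := by
  set T := lstar t (s y ⊔ y)
  set K : Set X := {z | z ≤ T ∧ s z ≤ T}
  have hyK : y ∈ K := ⟨le_sup_right.trans (le_lstar t _), le_sup_left.trans (le_lstar t _)⟩
  have hWT : sSup K ≤ T := sSup_le fun _ hz => hz.1
  have hsWT : s (sSup K) ≤ T := hs.apply_sSup_le ⟨y, hyK⟩ fun _ hz => hz.2
  have htWK : t (sSup K) ∈ K := by
    refine ⟨(ht hWT).trans (apply_lstar_le ht _), ?_⟩
    calc s (t (sSup K)) ≤ lstar t (s (sSup K) ⊔ sSup K) := h _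
      _ ≤ lstar t T := lstar_mono t (sup_le hsWT hWT)
      _ ≤ T := lstar_lstar_le ht _
  exact (hs.monotone (lstar_le_sSup hyK htWK)).trans hsWT

theorem lstar_apply_le (hs : IsAffine s) (ht : Monotone t)
    (h : ∀ x, s (t x) ≤ t (lstar s x) ⊔ lstar s x) (y : X) :
    lstar s (t y) ≤ t (lstar s y) ⊔ lstar s y := by
  refine lstar_le (sup_le (le_sup_of_le_left (ht (le_lstar s y))) ?_)
  rw [hs.map_sup]
  refine sup_le ?_ (le_sup_of_le_right (apply_lstar_le hs.monotone y))
  calc s (t (lstar s y)) ≤ t (lstar s (lstar s y)) ⊔ lstar s (lstar s y) := h _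
    _ ≤ t (lstar s y) ⊔ lstar s y :=
      sup_le_sup (ht (lstar_lstar_le hs.monotone y)) (lstar_lstar_le hs.monotone y)

theorem apply_lstar_le_lstar_lstar (hs : IsAffine s) (ht : Monotone t)
    (h : ∀ x, s (t x) ≤ t (lstar s x) ⊔ lstar s x) (y : X) :
    s (lstar t y) ≤ lstar t (lstar s y) := by
  set T := lstar t (lstar s y)
  set K : Set X := {z | z ≤ T ∧ s z ≤ z}
  have hyK : lstar s y ∈ K := ⟨le_lstar t _, apply_lstar_le hs.monotone y⟩
  have hWT : sSup K ≤ T := sSup_le fun _ hz => hz.1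
  have hsW : s (sSup K) ≤ sSup K :=
    hs.apply_sSup_le ⟨_, hyK⟩ fun _ hz => hz.2.trans (le_sSup hz)
  have hsWW : lstar s (sSup K) ≤ sSup K := lstar_le (sup_le le_rfl hsW)
  -- `s^* (t W)` is `s`-closed and below `T`, hence below `W`, and it lies above `t W`.
  have hstW : lstar s (t (sSup K)) ∈ K := by
    refine ⟨?_, apply_lstar_le hs.monotone _⟩
    calc lstar s (t (sSup K)) ≤ t (lstar s (sSup K)) ⊔ lstar s (sSup K) :=
          hs.lstar_apply_le ht h _
      _ ≤ t (sSup K) ⊔ sSup K := sup_le_sup (ht hsWW) hsWW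
      _ ≤ T := sup_le ((ht hWT).trans (apply_lstar_le ht _)) hWT
  have htW : t (sSup K) ≤ sSup K := (le_lstar s _).trans (le_sSup hstW)
  have hyW : lstar t y ≤ sSup K := lstar_le (sup_le ((le_lstar s y).trans (le_sSup hyK)) htW)
  exact (hs.monotone hyW).trans (hsW.trans hWT)

end IsAffine

end CompleteLattice

/-- Let `s` be affine and `t` monotone. If `s ∘ t ≤ t^* ∘ (s ⊔ id)` then
`s^* ∘ t^* ≤ t^* ∘ s^*`; similarly if `s ∘ t ≤ (t ⊔ id) ∘ s^*` then `s^* ∘ t^* ≤ t^* ∘ s^*`. -/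
theorem lstar_comm_of_partial_comm {X : Type*} [CompleteLattice X] (s t : X → X)
    (hsaff : ∀ S : Set X, S.Nonempty → s (sSup S) = ⨆ x ∈ S, s x)
    (ht : Monotone t) :
    ((∀ x, s (t x) ≤ lstar t (s x ⊔ x)) →
        ∀ x, lstar s (lstar t x) ≤ lstar t (lstar s x)) ∧
    ((∀ x, s (t x) ≤ t (lstar s x) ⊔ lstar s x) →
        ∀ x, lstar s (lstar t x) ≤ lstar t (lstar s x)) := by
  have hs : IsAffine s := hsaff
  refine ⟨fun h x => lstar_lstar_le_of_apply_le ?_, fun h x => lstar_lstar_le_of_apply_le ?_⟩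
  · have hsx : s (lstar s x) ⊔ lstar s x = lstar s x :=
      sup_eq_right.mpr (apply_lstar_le hs.monotone x)
    simpa only [hsx] using hs.apply_lstar_le_lstar_sup ht h (lstar s x)
  · exact (hs.apply_lstar_le_lstar_lstar ht h _).trans
      (lstar_mono t (lstar_lstar_le hs.monotone x))
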